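/- Let p, q > N-1 and let x : [0,∞) → ℝ^N be a C¹ solution with pairwise distinct coordinates of the noncompact system dx_i/dt = (q-p) + (q+p)x_i + 2∑_{j≠i}(x_i x_j - 1)/(x_i - x_j) on the chamber C_N = {1 ≤ x_1 ≤ ... ≤ x_N}. Then e_1^N(x(t)) = e^{(p+q)t}( e_1^N(x_0) - N(p-q)/(p+q) ) + N(p-q)/(p+q), and for 2 ≤ k ≤ N the function e_k^N(x(t)) solves the linear ODE d/dt e_k = k((p+q)+1-k)e_k + (N-k+1)(q-p)e_{k-1} - (N-k+2)(N-k+1)·(-1)·e_{k-2}; in particular the map t ↦ e(x(t)) extends to all t ≥ 0 (no finite-time explosion of the symmetric functions). -/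

import Mathlib

/-!
By the product rule, `d/dt e_{k+1}(x) = ∑ᵢ ẋᵢ e_k(x̂ᵢ)`, where `x̂ᵢ` omits the `i`-th variable,
so everything reduces to sums of the drift against `e_k(x̂ᵢ)`. The interaction
`(xᵢxⱼ - 1)/(xᵢ - xⱼ)` is antisymmetric in `(i, j)`, so it drops out of `e_1`, which therefore
satisfies the scalar linear equation `ė₁ = (p + q) e₁ + N (q - p)`. For larger `k`, symmetrising
in `(i, j)` and using `e_{k+1}(x̂ᵢ) - e_{k+1}(x̂ⱼ) = (xⱼ - xᵢ) e_k(x̂ᵢⱼ)` cancels every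
denominator; the counting identities `∑ᵢ e_k(x̂ᵢ) = (N - k) e_k` and
`∑ᵢ xᵢ e_k(x̂ᵢ) = (k + 1) e_{k+1}` then turn what remains into a linear combination of `e_k`,
`e_{k-1}`, `e_{k-2}`.
-/

open Finset

/-- The elementary symmetric polynomial of degree `k` in the variables indexed by `S`. -/
noncomputable def esym {N : ℕ} (k : ℕ) (S : Finset (Fin N)) (x : Fin N → ℝ) : ℝ :=
  ∑ s ∈ Finset.powersetCard k S, ∏ i ∈ s, x i

section PairSums

variable {ι : Type*} [DecidableEq ι]

theorem sum_sum_erase_comm {M : Type*} [AddCommMonoid M] (S : Finset ι) (a : ι → ι → M) :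
    ∑ i ∈ S, ∑ j ∈ S.erase i, a i j = ∑ i ∈ S, ∑ j ∈ S.erase i, a j i :=
  Finset.sum_comm' fun i j => by simp only [mem_erase]; tauto

theorem two_mul_sum_sum_erase {R : Type*} [NonAssocSemiring R] (S : Finset ι) (a : ι → ι → R) :
    2 * ∑ i ∈ S, ∑ j ∈ S.erase i, a i j = ∑ i ∈ S, ∑ j ∈ S.erase i, (a i j + a j i) := by
  conv_lhs => rw [two_mul]; rhs; rw [sum_sum_erase_comm]
  simp only [← sum_add_distrib]

theorem sum_powersetCard_succ_sum_erase {M : Type*} [AddCommMonoid M] (k : ℕ) (S : Finset ι)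
    (F : ι → Finset ι → M) :
    ∑ A ∈ S.powersetCard (k + 1), ∑ i ∈ A, F i (A.erase i)
      = ∑ i ∈ S, ∑ B ∈ (S.erase i).powersetCard k, F i B := by
  rw [sum_sigma', sum_sigma']
  refine sum_nbij' (fun z => ⟨z.2, z.1.erase z.2⟩) (fun z => ⟨insert z.1 z.2, z.1⟩)
    ?_ ?_ ?_ ?_ fun _ _ => rfl
  · rintro ⟨A, i⟩ h
    simp only [mem_sigma, mem_powersetCard] at h ⊢
    obtain ⟨⟨hAS, hcard⟩, hiA⟩ := h
    exact ⟨hAS hiA, erase_subset_erase i hAS, by rw [card_erase_of_mem hiA, hcard]; rfl⟩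
  · rintro ⟨i, B⟩ h
    simp only [mem_sigma, mem_powersetCard, subset_erase] at h ⊢
    obtain ⟨hiS, ⟨hBS, hiB⟩, hcard⟩ := h
    exact ⟨⟨insert_subset hiS hBS, by rw [card_insert_of_notMem hiB, hcard]⟩, mem_insert_self i B⟩
  · rintro ⟨A, i⟩ h
    simp only [mem_sigma] at h
    simp only [insert_erase h.2]
  · rintro ⟨i, B⟩ h
    simp only [mem_sigma, mem_powersetCard, subset_erase] at h
    simp only [erase_insert h.2.1.2]

end PairSums

section ElementarySymmetric

variable {N : ℕ}

theorem esym_eq_esymm (k : ℕ) (S : Finset (Fin N)) (x : Fin N → ℝ) :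
    esym k S x = (S.val.map x).esymm k :=
  (Finset.esymm_map_val x S k).symm

theorem esym_succ_of_mem {k : ℕ} {S : Finset (Fin N)} {i : Fin N} (hi : i ∈ S) (x : Fin N → ℝ) :
    esym (k + 1) S x = esym (k + 1) (S.erase i) x + x i * esym k (S.erase i) x := by
  simp only [esym_eq_esymm]
  conv_lhs => rw [← insert_erase hi, insert_val_of_notMem (notMem_erase i S)]
  simp [Multiset.esymm, Multiset.powersetCard_cons, Multiset.map_map,
    Multiset.sum_map_mul_left]

theorem sum_esym_erase (k : ℕ) (S : Finset (Fin N)) (x : Fin N → ℝ) :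
    ∑ i ∈ S, esym k (S.erase i) x = ((#S : ℝ) - k) * esym k S x := by
  simp only [esym]
  rw [mul_sum, sum_comm' (t' := S.powersetCard k) (s' := fun B => S \ B)
    (f := fun _ B => ∏ j ∈ B, x j) fun i B => by
      simp only [mem_powersetCard, subset_erase, mem_sdiff]; tauto]
  refine sum_congr rfl fun B hB => ?_
  obtain ⟨hBS, hcard⟩ := mem_powersetCard.1 hB
  rw [sum_const, nsmul_eq_mul, card_sdiff_of_subset hBS, Nat.cast_sub (card_le_card hBS), hcard]

theorem sum_mul_esym_erase (k : ℕ) (S : Finset (Fin N)) (x : Fin N → ℝ) :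
    ∑ i ∈ S, x i * esym k (S.erase i) x = ((k : ℝ) + 1) * esym (k + 1) S x := by
  have hrec : ∀ i ∈ S,
      x i * esym k (S.erase i) x = esym (k + 1) S x - esym (k + 1) (S.erase i) x :=
    fun i hi => by rw [esym_succ_of_mem hi x]; ring
  rw [sum_congr rfl hrec, sum_sub_distrib, sum_const, sum_esym_erase, nsmul_eq_mul]
  push_cast
  ring

theorem esym_succ_erase_sub_esym_succ_erase {k : ℕ} {S : Finset (Fin N)} {i j : Fin N}
    (hi : i ∈ S) (hj : j ∈ S) (hij : i ≠ j) (x : Fin N → ℝ) :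
    esym (k + 1) (S.erase i) x - esym (k + 1) (S.erase j) x
      = (x j - x i) * esym k ((S.erase i).erase j) x := by
  rw [esym_succ_of_mem (mem_erase.2 ⟨hij.symm, hj⟩) x, esym_succ_of_mem (mem_erase.2 ⟨hij, hi⟩) x,
    erase_right_comm]
  ring

theorem sum_sum_esym_erase_erase (k : ℕ) (S : Finset (Fin N)) (x : Fin N → ℝ) :
    ∑ i ∈ S, ∑ j ∈ S.erase i, esym k ((S.erase i).erase j) x
      = ((#S : ℝ) - 1 - k) * ((#S : ℝ) - k) * esym k S x := by
  rw [sum_congr rfl fun i hi => by rw [sum_esym_erase, cast_card_erase_of_mem hi], ← mul_sum,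
    sum_esym_erase]
  ring

theorem sum_sum_mul_mul_esym_erase_erase (k : ℕ) (S : Finset (Fin N)) (x : Fin N → ℝ) :
    ∑ i ∈ S, ∑ j ∈ S.erase i, x i * x j * esym k ((S.erase i).erase j) x
      = ((k : ℝ) + 1) * ((k : ℝ) + 2) * esym (k + 2) S x := by
  simp only [mul_assoc, ← mul_sum, sum_mul_esym_erase]
  rw [sum_congr rfl fun i _ => mul_left_comm .., ← mul_sum, sum_mul_esym_erase]
  push_cast
  ring

theorem hasDerivAt_esym_succ (k : ℕ) (S : Finset (Fin N)) {x : ℝ → Fin N → ℝ} {x' : Fin N → ℝ}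
    {t : ℝ} (hx : ∀ i ∈ S, HasDerivAt (fun s => x s i) (x' i) t) :
    HasDerivAt (fun s => esym (k + 1) S (x s)) (∑ i ∈ S, x' i * esym k (S.erase i) (x t)) t := by
  have hprod : ∀ A ∈ S.powersetCard (k + 1), HasDerivAt (fun s => ∏ i ∈ A, x s i)
      (∑ i ∈ A, (∏ j ∈ A.erase i, x t j) * x' i) t := fun A hA => by
    simpa using HasDerivAt.fun_finsetProd fun i hi => hx i (mem_powersetCard.1 hA |>.1 hi)
  refine (HasDerivAt.fun_sum hprod).congr_deriv ?_
  rw [sum_powersetCard_succ_sum_erase k S fun i B => (∏ j ∈ B, x t j) * x' i]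
  simp only [esym, mul_sum, mul_comm]

end ElementarySymmetric

section JacobiDrift

variable {N : ℕ}

noncomputable def jacobiInteraction (S : Finset (Fin N)) (x : Fin N → ℝ) (i : Fin N) : ℝ :=
  ∑ j ∈ S.erase i, (x i * x j - 1) / (x i - x j)

noncomputable def jacobiDrift (p q : ℝ) (S : Finset (Fin N)) (x : Fin N → ℝ) (i : Fin N) : ℝ :=
  (q - p) + (q + p) * x i + 2 * jacobiInteraction S x i

theorem sum_jacobiInteraction (S : Finset (Fin N)) (x : Fin N → ℝ) :
    ∑ i ∈ S, jacobiInteraction S x i = 0 := by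
  have hanti : ∀ i j, (x i * x j - 1) / (x i - x j) + (x j * x i - 1) / (x j - x i) = 0 :=
    fun i j => by rw [← neg_sub (x i), div_neg, mul_comm (x j), add_neg_cancel]
  have h := two_mul_sum_sum_erase S fun i j => (x i * x j - 1) / (x i - x j)
  simp only [hanti, sum_const_zero, mul_eq_zero, two_ne_zero, false_or] at h
  exact h

theorem jacobiInteraction_pair_mul_esym_erase {k : ℕ} {S : Finset (Fin N)} {x : Fin N → ℝ}
    {i j : Fin N} (hi : i ∈ S) (hj : j ∈ S) (hij : i ≠ j) (hxij : x i ≠ x j) :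
    (x i * x j - 1) / (x i - x j) * esym (k + 1) (S.erase i) x
        + (x j * x i - 1) / (x j - x i) * esym (k + 1) (S.erase j) x
      = -((x i * x j - 1) * esym k ((S.erase i).erase j) x) := by
  have hdiff := esym_succ_erase_sub_esym_succ_erase (k := k) hi hj hij x
  rw [show esym (k + 1) (S.erase j) x = esym (k + 1) (S.erase i) x
    - (x j - x i) * esym k ((S.erase i).erase j) x by linarith]
  have : x i - x j ≠ 0 := sub_ne_zero.2 hxij
  have : x j - x i ≠ 0 := sub_ne_zero.2 hxij.symm
  field_simp
  ring

theorem sum_jacobiInteraction_mul_esym_erase {S : Finset (Fin N)} {x : Fin N → ℝ}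
    (hx : Set.InjOn x S) (k : ℕ) :
    ∑ i ∈ S, 2 * jacobiInteraction S x i * esym (k + 1) (S.erase i) x
      = ((#S : ℝ) - 1 - k) * ((#S : ℝ) - k) * esym k S x
        - ((k : ℝ) + 1) * ((k : ℝ) + 2) * esym (k + 2) S x := by
  have hpair := two_mul_sum_sum_erase S fun i j =>
    (x i * x j - 1) / (x i - x j) * esym (k + 1) (S.erase i) x
  rw [sum_congr rfl fun i hi => sum_congr rfl fun j hj =>
    jacobiInteraction_pair_mul_esym_erase hi (mem_of_mem_erase hj) (ne_of_mem_erase hj).symm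
      (hx.ne hi (mem_of_mem_erase hj) (ne_of_mem_erase hj).symm)] at hpair
  simp only [sub_mul, one_mul, neg_sub, sum_sub_distrib, sum_sum_esym_erase_erase,
    sum_sum_mul_mul_esym_erase_erase] at hpair
  simp only [jacobiInteraction, mul_assoc, sum_mul, ← mul_sum]
  rw [hpair]
  ring

theorem sum_jacobiDrift (p q : ℝ) (S : Finset (Fin N)) (x : Fin N → ℝ) :
    ∑ i ∈ S, jacobiDrift p q S x i = #S * (q - p) + (q + p) * ∑ i ∈ S, x i := by
  simp only [jacobiDrift, sum_add_distrib, ← mul_sum, sum_jacobiInteraction, sum_const,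
    nsmul_eq_mul]
  ring

theorem sum_jacobiDrift_mul_esym_erase (p q : ℝ) {S : Finset (Fin N)} {x : Fin N → ℝ}
    (hx : Set.InjOn x S) (k : ℕ) :
    ∑ i ∈ S, jacobiDrift p q S x i * esym (k + 1) (S.erase i) x
      = ((k : ℝ) + 2) * (p + q - k - 1) * esym (k + 2) S x
        + ((#S : ℝ) - k - 1) * (q - p) * esym (k + 1) S x
        + ((#S : ℝ) - k) * ((#S : ℝ) - k - 1) * esym k S x := by
  have hsplit : ∀ i ∈ S, jacobiDrift p q S x i * esym (k + 1) (S.erase i) x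
      = (q - p) * esym (k + 1) (S.erase i) x + (q + p) * (x i * esym (k + 1) (S.erase i) x)
        + 2 * jacobiInteraction S x i * esym (k + 1) (S.erase i) x := fun i _ => by
    rw [jacobiDrift]; ring
  rw [sum_congr rfl hsplit, sum_add_distrib, sum_add_distrib, ← mul_sum, ← mul_sum,
    sum_esym_erase, sum_mul_esym_erase, sum_jacobiInteraction_mul_esym_erase hx]
  push_cast
  ring

end JacobiDrift

theorem eq_exp_mul_sub_add_of_hasDerivAt {f : ℝ → ℝ} {a c : ℝ}
    (hf : ∀ t, 0 ≤ t → HasDerivAt f (a * (f t - c)) t) {t : ℝ} (ht : 0 ≤ t) :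
    f t = Real.exp (a * t) * (f 0 - c) + c := by
  set g : ℝ → ℝ := fun s => Real.exp (-a * s) * (f s - c)
  have hg : ∀ s, 0 ≤ s → HasDerivAt g 0 s := fun s hs => by
    have hexp := ((hasDerivAt_id s).const_mul (-a)).exp
    refine (hexp.mul ((hf s hs).sub_const c)).congr_deriv ?_
    ring
  have hconst : g t = g 0 :=
    constant_of_has_deriv_right_zero (fun s hs => (hg s hs.1).continuousAt.continuousWithinAt)
      (fun s hs => (hg s hs.1).hasDerivWithinAt) t ⟨ht, le_rfl⟩
  simp only [g, mul_zero, Real.exp_zero, one_mul] at hconst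
  rw [← hconst, ← mul_assoc, ← Real.exp_add]
  simp

theorem stmt19_general {N : ℕ} (hN : 1 ≤ N) (p q : ℝ)
    (hp : (N : ℝ) - 1 < p) (hq : (N : ℝ) - 1 < q)
    (x : ℝ → Fin N → ℝ)
    (hdist : ∀ t : ℝ, 0 ≤ t → ∀ i j : Fin N, i ≠ j → x t i ≠ x t j)
    (hODE : ∀ t : ℝ, 0 ≤ t → ∀ i : Fin N,
      HasDerivAt (fun s => x s i)
        ((q - p) + (q + p) * x t i
          + 2 * ∑ j ∈ (univ : Finset (Fin N)).erase i,
              (x t i * x t j - 1) / (x t i - x t j)) t) :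
    (∀ t : ℝ, 0 ≤ t →
      ∑ i : Fin N, x t i
        = Real.exp ((p + q) * t)
            * (∑ i : Fin N, x 0 i - N * (p - q) / (p + q))
          + N * (p - q) / (p + q)) ∧
    (∀ k : ℕ, 2 ≤ k → k ≤ N → ∀ t : ℝ, 0 ≤ t →
      HasDerivAt (fun s => esym k univ (x s))
        ((k : ℝ) * ((p + q) + 1 - k) * esym k univ (x t)
          + ((N : ℝ) - k + 1) * (q - p) * esym (k - 1) univ (x t)
          + ((N : ℝ) - k + 2) * ((N : ℝ) - k + 1) * esym (k - 2) univ (x t)) t) := by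
  have hpq : p + q ≠ 0 := by
    have : (1 : ℝ) ≤ N := by exact_mod_cast hN
    linarith
  have hinj : ∀ t, 0 ≤ t → Set.InjOn (x t) (univ : Finset (Fin N)) :=
    fun t ht i _ j _ hxij => by_contra fun hij => hdist t ht i j hij hxij
  refine ⟨fun t ht => eq_exp_mul_sub_add_of_hasDerivAt (f := fun s => ∑ i, x s i)
    (fun s hs => ?_) ht, ?_⟩
  · refine (HasDerivAt.fun_sum fun i _ => hODE s hs i).congr_deriv ?_
    change ∑ i, jacobiDrift p q univ (x s) i = _
    rw [sum_jacobiDrift, card_univ, Fintype.card_fin]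
    field_simp
    ring
  · intro k hk _ t ht
    obtain ⟨m, rfl⟩ : ∃ m, k = m + 2 := ⟨k - 2, by omega⟩
    refine (hasDerivAt_esym_succ (m + 1) univ fun i _ => hODE t ht i).congr_deriv ?_
    change ∑ i, jacobiDrift p q univ (x t) i * _ = _
    rw [sum_jacobiDrift_mul_esym_erase p q (hinj t ht), card_univ, Fintype.card_fin]
    push_cast
    ring

theorem stmt19 {N : ℕ} (hN : 1 ≤ N) (p q : ℝ)
    (hp : (N : ℝ) - 1 < p) (hq : (N : ℝ) - 1 < q)
    (x : ℝ → Fin N → ℝ)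
    (hchamber : ∀ t : ℝ, 0 ≤ t → (( ∀ i : Fin N, 1 ≤ x t i) ∧ ∀ i j : Fin N, i ≤ j → x t i ≤ x t j))
    (hdist : ∀ t : ℝ, 0 ≤ t → ∀ i j : Fin N, i ≠ j → x t i ≠ x t j)
    (hODE : ∀ t : ℝ, 0 ≤ t → ∀ i : Fin N,
      HasDerivAt (fun s => x s i)
        ((q - p) + (q + p) * x t i
          + 2 * ∑ j ∈ (univ : Finset (Fin N)).erase i,
              (x t i * x t j - 1) / (x t i - x t j)) t) :
    (∀ t : ℝ, 0 ≤ t →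
      ∑ i : Fin N, x t i
        = Real.exp ((p + q) * t)
            * (∑ i : Fin N, x 0 i - N * (p - q) / (p + q))
          + N * (p - q) / (p + q)) ∧
    (∀ k : ℕ, 2 ≤ k → k ≤ N → ∀ t : ℝ, 0 ≤ t →
      HasDerivAt (fun s => esym k univ (x s))
        ((k : ℝ) * ((p + q) + 1 - k) * esym k univ (x t)
          + ((N : ℝ) - k + 1) * (q - p) * esym (k - 1) univ (x t)
          + ((N : ℝ) - k + 2) * ((N : ℝ) - k + 1) * esym (k - 2) univ (x t)) t) :=
  stmt19_general hN p q hp hq x hdist hODE
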